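/- Suppose that X is a Fréchet sequence space over ℤ in which the sequence (e_n)_{n∈ℤ} of canonical vectors is a basis, that (‖·‖_k)_{k∈ℕ} is an increasing sequence of seminorms inducing the topology of X, and that the bilateral weighted forward shift F_w (for a weight sequence w = (w_n)_{n∈ℤ} of nonzero scalars) is an invertible operator on X. Then the following assertions are equivalent: (i) F_w : X → X is topologically expansive; (ii) there exists k ∈ ℕ such that sup_{n∈ℕ} |w₁ ⋯ w_n| ‖e_{n+1}‖_k = ∞ or sup_{n∈ℕ} |w_{−n+1} ⋯ w₀|⁻¹ ‖e_{−n+1}‖_k = ∞; (iii) F_w : X → X is topologically positively expansive or F_w⁻¹ : X → X is topologically positively expansive. -/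

import Mathlib

open Filter Topology Set

/-- An invertible operator `T` is topologically expansive: for each nonzero `x` there is `k`
with `sup_{n∈ℤ} ‖Tⁿ x‖_k = ∞`. -/
def TopologicallyExpansiveSeq {𝕂 : Type*} [RCLike 𝕂] {E : Type*} [AddCommGroup E] [Module 𝕂 E]
    [TopologicalSpace E] [IsTopologicalAddGroup E]
    (p : ℕ → Seminorm 𝕂 E) (T : E ≃L[𝕂] E) : Prop :=
  ∀ x : E, x ≠ 0 → ∃ k : ℕ, ∀ R : ℝ, ∃ n : ℤ, R < p k ((T ^ n) x)

/-- An operator `T` is topologically positively expansive: for each nonzero `x` there is `k`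
with `sup_{n∈ℕ} ‖Tⁿ x‖_k = ∞`. -/
def TopologicallyPositivelyExpansiveSeq {𝕂 : Type*} [RCLike 𝕂] {E : Type*} [AddCommGroup E]
    [Module 𝕂 E] (p : ℕ → Seminorm 𝕂 E) (T : E → E) : Prop :=
  ∀ x : E, x ≠ 0 → ∃ k : ℕ, ∀ R : ℝ, ∃ n : ℕ, 1 ≤ n ∧ R < p k (T^[n] x)

/-! Let `D` be the cocycle with `D 1 = 1` and `D (j + 1) = w j * D j` (`weightProduct`). Then
`F_wⁿ e₁ = D (1 + n) • e_{1+n}`, so condition (ii) says that `j ↦ ‖D j‖ * ‖e_j‖_k` is unbounded at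
`+∞` or at `-∞`, and testing (i) or (iii) on `e₁` gives (ii).

Conversely, since the basis expansions converge, the coordinate projections `x ↦ x_j • e_j` are
pointwise bounded, hence equicontinuous by Banach–Steinhaus (`X` is Fréchet, hence barrelled):
`‖x_j‖ * ‖e_j‖_k ≤ C * ‖x‖_{k'}`. The `j`-th coordinate of `F_w^{j-t} x` is `D j / D t * x_t`, so
for `x_t ≠ 0` this yields `‖D j‖ * ‖e_j‖_k ≤ C * ‖D t‖ / ‖x_t‖ * ‖F_w^{j-t} x‖_{k'}`: growth of
the weights at `+∞` (resp. `-∞`) forces every nonzero forward (resp. backward) orbit to be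
unbounded.
-/

section BoundedOnIntegers

variable {f : ℤ → ℝ}

theorem bddAbove_image_Ici_iff_isBoundedUnder_atTop (m : ℤ) :
    BddAbove (f '' Ici m) ↔ IsBoundedUnder (· ≤ ·) atTop f := by
  refine ⟨fun ⟨b, hb⟩ => isBoundedUnder_of_eventually_le
    (eventually_atTop.2 ⟨m, fun n hn => hb ⟨n, hn, rfl⟩⟩), fun h => ?_⟩
  obtain ⟨b, hb⟩ := h.eventually_le
  obtain ⟨N, hN⟩ := eventually_atTop.1 hb
  have hsub : f '' Ici m ⊆ f '' Icc m N ∪ f '' Ici N := by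
    rintro _ ⟨n, hn, rfl⟩
    rcases le_total n N with h | h
    exacts [Or.inl ⟨n, ⟨hn, h⟩, rfl⟩, Or.inr ⟨n, h, rfl⟩]
  exact (bddAbove_union.2 ⟨((finite_Icc m N).image f).bddAbove,
    b, forall_mem_image.2 hN⟩).mono hsub

theorem bddAbove_image_Iic_iff_isBoundedUnder_atBot (m : ℤ) :
    BddAbove (f '' Iic m) ↔ IsBoundedUnder (· ≤ ·) atBot f := by
  refine ⟨fun ⟨b, hb⟩ => isBoundedUnder_of_eventually_le
    (eventually_atBot.2 ⟨m, fun n hn => hb ⟨n, hn, rfl⟩⟩), fun h => ?_⟩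
  obtain ⟨b, hb⟩ := h.eventually_le
  obtain ⟨N, hN⟩ := eventually_atBot.1 hb
  have hsub : f '' Iic m ⊆ f '' Icc N m ∪ f '' Iic N := by
    rintro _ ⟨n, hn, rfl⟩
    rcases le_total N n with h | h
    exacts [Or.inl ⟨n, ⟨h, hn⟩, rfl⟩, Or.inr ⟨n, h, rfl⟩]
  exact (bddAbove_union.2 ⟨((finite_Icc N m).image f).bddAbove,
    b, forall_mem_image.2 hN⟩).mono hsub

theorem bddAbove_range_iff_isBoundedUnder_atTop_and_atBot :
    BddAbove (range f) ↔ IsBoundedUnder (· ≤ ·) atTop f ∧ IsBoundedUnder (· ≤ ·) atBot f := by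
  rw [← image_univ, ← Iic_union_Ici (a := 0), image_union, bddAbove_union,
    bddAbove_image_Iic_iff_isBoundedUnder_atBot, bddAbove_image_Ici_iff_isBoundedUnder_atTop,
    and_comm]

theorem forall_exists_lt_natCast_add_iff (c : ℤ) :
    (∀ R : ℝ, ∃ n : ℕ, 1 ≤ n ∧ R < f (n + c)) ↔ ¬IsBoundedUnder (· ≤ ·) atTop f := by
  rw [← bddAbove_image_Ici_iff_isBoundedUnder_atTop (c + 1), not_bddAbove_iff]
  refine forall_congr' fun R => ⟨fun ⟨n, hn, hR⟩ => ⟨_, ⟨n + c, by rw [mem_Ici]; omega, rfl⟩, hR⟩,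
    ?_⟩
  rintro ⟨_, ⟨m, hm, rfl⟩, hR⟩
  rw [mem_Ici] at hm
  exact ⟨(m - c).toNat, by omega, by rwa [Int.toNat_of_nonneg (by omega), sub_add_cancel]⟩

theorem forall_exists_lt_sub_natCast_iff (c : ℤ) :
    (∀ R : ℝ, ∃ n : ℕ, 1 ≤ n ∧ R < f (c - n)) ↔ ¬IsBoundedUnder (· ≤ ·) atBot f := by
  rw [← bddAbove_image_Iic_iff_isBoundedUnder_atBot (c - 1), not_bddAbove_iff]
  refine forall_congr' fun R => ⟨fun ⟨n, hn, hR⟩ => ⟨_, ⟨c - n, by rw [mem_Iic]; omega, rfl⟩, hR⟩,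
    ?_⟩
  rintro ⟨_, ⟨m, hm, rfl⟩, hR⟩
  rw [mem_Iic] at hm
  exact ⟨(c - m).toNat, by omega, by rwa [Int.toNat_of_nonneg (by omega), sub_sub_cancel]⟩

end BoundedOnIntegers

theorem Filter.IsBoundedUnder.of_le_mul_comp {α β : Type*} {l : Filter α} {l' : Filter β}
    {f : α → ℝ} {g : β → ℝ} {φ : α → β} {A : ℝ} (hA : 0 ≤ A) (hφ : Tendsto φ l l')
    (hfg : ∀ i, f i ≤ A * g (φ i)) (hg : IsBoundedUnder (· ≤ ·) l' g) :
    IsBoundedUnder (· ≤ ·) l f :=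
  ((monotone_mul_left_of_nonneg hA).isBoundedUnder_le_comp (hφ.isBoundedUnder_comp hg)).mono_le
    (Eventually.of_forall hfg)

theorem isBoundedUnder_of_le_mul_sub {f g : ℤ → ℝ} {A : ℝ} (hA : 0 ≤ A) (t : ℤ)
    (h : ∀ j, f j ≤ A * g (j - t)) :
    (IsBoundedUnder (· ≤ ·) atTop g → IsBoundedUnder (· ≤ ·) atTop f) ∧
      (IsBoundedUnder (· ≤ ·) atBot g → IsBoundedUnder (· ≤ ·) atBot f) := by
  simp only [sub_eq_add_neg] at h
  exact ⟨.of_le_mul_comp hA (tendsto_atTop_add_const_right _ (-t) tendsto_id) h,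
    .of_le_mul_comp hA (tendsto_atBot_add_const_right _ (-t) tendsto_id) h⟩

section WeightProduct

variable {K : Type*} [Field K] {w : ℤ → K}

/-- `w₁ ⋯ w_{j-1}` for `j ≥ 1` and `(w_j ⋯ w₀)⁻¹` for `j ≤ 1`: one of the two products is empty. -/
noncomputable def weightProduct (w : ℤ → K) (j : ℤ) : K :=
  (∏ i ∈ Finset.Ico 1 j, w i) / ∏ i ∈ Finset.Ico j 1, w i

@[simp]
theorem weightProduct_one : weightProduct w 1 = 1 := by
  simp [weightProduct]

theorem weightProduct_ne_zero (hw : ∀ i, w i ≠ 0) (j : ℤ) : weightProduct w j ≠ 0 :=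
  div_ne_zero (Finset.prod_ne_zero_iff.2 fun i _ => hw i)
    (Finset.prod_ne_zero_iff.2 fun i _ => hw i)

theorem weightProduct_add_one (hw : ∀ i, w i ≠ 0) (j : ℤ) :
    weightProduct w (j + 1) = w j * weightProduct w j := by
  rcases le_or_gt 1 j with h | h
  · simp only [weightProduct, ← Finset.prod_Ico_mul_eq_prod_Ico_add_one h,
      Finset.Ico_eq_empty_of_le h, Finset.Ico_eq_empty_of_le (h.trans (Int.le_add_one le_rfl))]
    ring
  · rw [weightProduct, weightProduct, ← Finset.insert_Ico_add_one_left_eq_Ico h,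
      Finset.prod_insert (by simp), Finset.Ico_eq_empty_of_le (by omega : j + 1 ≤ 1),
      Finset.Ico_eq_empty_of_le h.le]
    field_simp [hw j]

end WeightProduct

section NormWeightProduct

variable {K : Type*} [NormedField K] (w : ℤ → K)

theorem norm_weightProduct_natCast_add_one (n : ℕ) :
    ‖weightProduct w (n + 1)‖ = ∏ j ∈ Finset.Icc (1 : ℤ) n, ‖w j‖ := by
  rw [weightProduct, Finset.Ico_eq_empty_of_le (by omega : (1 : ℤ) ≤ n + 1),
    Finset.Ico_add_one_right_eq_Icc, Finset.prod_empty, div_one, norm_prod]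

theorem norm_weightProduct_one_sub_natCast (n : ℕ) :
    ‖weightProduct w (1 - n)‖ = (∏ j ∈ Finset.Icc (1 - (n : ℤ)) 0, ‖w j‖)⁻¹ := by
  rw [weightProduct, Finset.Ico_eq_empty_of_le (by omega : 1 - (n : ℤ) ≤ 1),
    ← zero_add (1 : ℤ), Finset.Ico_add_one_right_eq_Icc, Finset.prod_empty, one_div, norm_inv,
    norm_prod]

end NormWeightProduct

theorem ContinuousLinearEquiv.coe_pow {R M : Type*} [Semiring R] [TopologicalSpace M]
    [AddCommMonoid M] [Module R M] (T : M ≃L[R] M) (n : ℕ) : ⇑(T ^ n) = (⇑T)^[n] :=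
  hom_coe_pow _ rfl (fun _ _ => rfl) _ _

theorem ContinuousLinearEquiv.coe_zpow_neg_natCast {R M : Type*} [Semiring R]
    [TopologicalSpace M] [AddCommMonoid M] [Module R M] (T : M ≃L[R] M) (n : ℕ) :
    ⇑(T ^ (-(n : ℤ))) = (⇑T.symm)^[n] := by
  rw [zpow_neg, zpow_natCast, ← inv_pow, ContinuousLinearEquiv.coe_pow]
  rfl

def IsWeightedShift {𝕂 E : Type*} [Mul 𝕂] (ι : E → ℤ → 𝕂) (w : ℤ → 𝕂) (T : E → E) : Prop :=
  ∀ x n, ι (T x) n = w (n - 1) * ι x (n - 1)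

section WeightedShift

variable {𝕂 E : Type*} [Field 𝕂] [AddCommGroup E] [Module 𝕂 E] [TopologicalSpace E]
  {ι : E → ℤ → 𝕂} {w : ℤ → 𝕂} {T : E ≃L[𝕂] E}

namespace IsWeightedShift

theorem apply_symm (hT : IsWeightedShift ι w T) (hw : ∀ n, w n ≠ 0) (x : E) (j : ℤ) :
    ι (T.symm x) j = (w j)⁻¹ * ι x (j + 1) := by
  rw [← T.apply_symm_apply x, hT, add_sub_cancel_right, T.apply_symm_apply,
    inv_mul_cancel_left₀ (hw j)]

theorem apply_zpow (hT : IsWeightedShift ι w T) (hw : ∀ n, w n ≠ 0) (n : ℤ) (x : E) (j : ℤ) :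
    ι ((T ^ n) x) j = weightProduct w j / weightProduct w (j - n) * ι x (j - n) := by
  induction n using Int.induction_on generalizing x with
  | zero =>
    rw [zpow_zero]
    change ι x j = _
    rw [sub_zero, div_self (weightProduct_ne_zero hw j), one_mul]
  | succ n ih =>
    have hD : weightProduct w (j - n) = w (j - n - 1) * weightProduct w (j - n - 1) := by
      simpa using weightProduct_add_one hw (j - n - 1)
    rw [zpow_add_one]
    change ι ((T ^ (n : ℤ)) (T x)) j = _
    rw [ih, hT, sub_add_eq_sub_sub, hD]
    field_simp [hw (j - n - 1), weightProduct_ne_zero hw (j - n - 1)]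
  | pred n ih =>
    rw [zpow_sub_one]
    change ι ((T ^ (-(n : ℤ))) (T.symm x)) j = _
    rw [ih, hT.apply_symm hw, show j - (-(n : ℤ) - 1) = j - -n + 1 by ring,
      weightProduct_add_one hw]
    field_simp [hw (j - -n), weightProduct_ne_zero hw (j - -n)]

theorem zpow_apply_basis {ι : E →ₗ[𝕂] ℤ → 𝕂} (hι : Function.Injective ι) {e : ℤ → E}
    (he : ∀ n j : ℤ, ι (e n) j = if j = n then 1 else 0) (hT : IsWeightedShift ι w T)
    (hw : ∀ n, w n ≠ 0) (n t : ℤ) :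
    (T ^ n) (e t) = (weightProduct w (t + n) / weightProduct w t) • e (t + n) := by
  refine hι (funext fun j => ?_)
  rw [hT.apply_zpow hw, map_smul, Pi.smul_apply, he, he, smul_eq_mul]
  rcases eq_or_ne j (t + n) with rfl | hj
  · simp
  · simp [hj, show j - n ≠ t by omega]

end IsWeightedShift

end WeightedShift

theorem IsWeightedShift.norm_weightProduct_mul_le {𝕂 E : Type*} [NormedField 𝕂] [AddCommGroup E]
    [Module 𝕂 E] [TopologicalSpace E] {ι : E → ℤ → 𝕂} {w : ℤ → 𝕂} {T : E ≃L[𝕂] E}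
    (hT : IsWeightedShift ι w T) (hw : ∀ n, w n ≠ 0) {e : ℤ → E} {q q' : E → ℝ} {C : ℝ}
    (hC : ∀ j y, ‖ι y j‖ * q (e j) ≤ C * q' y) {x : E} {t : ℤ} (ht : ι x t ≠ 0) (j : ℤ) :
    ‖weightProduct w j‖ * q (e j) ≤
      C * ‖weightProduct w t‖ / ‖ι x t‖ * q' ((T ^ (j - t)) x) := by
  have h := hC j ((T ^ (j - t)) x)
  rw [hT.apply_zpow hw, sub_sub_cancel, norm_mul, norm_div] at h
  have hDt := norm_pos_iff.2 (weightProduct_ne_zero hw t)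
  have hxt := norm_pos_iff.2 ht
  calc ‖weightProduct w j‖ * q (e j)
      = ‖weightProduct w t‖ / ‖ι x t‖ *
          (‖weightProduct w j‖ / ‖weightProduct w t‖ * ‖ι x t‖ * q (e j)) := by
        field_simp
    _ ≤ ‖weightProduct w t‖ / ‖ι x t‖ * (C * q' ((T ^ (j - t)) x)) := by gcongr
    _ = _ := by ring

theorem tendsto_cofinite_zero_of_tendsto_sum_Icc {G : Type*} [AddCommGroup G] [TopologicalSpace G]
    [IsTopologicalAddGroup G] {f : ℤ → G} {x : G}
    (h : Tendsto (fun mn : ℕ × ℕ => ∑ j ∈ Finset.Icc (-(mn.1 : ℤ)) mn.2, f j) atTop (𝓝 x)) :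
    Tendsto f cofinite (𝓝 0) := by
  have hpair (a b : ℕ) : Tendsto (fun n : ℕ => (n + a, n + b)) atTop atTop := by
    rw [← prod_atTop_atTop_eq]
    exact (tendsto_add_atTop_nat a).prodMk (tendsto_add_atTop_nat b)
  have hdiff (a b : ℕ) : Tendsto (fun n : ℕ =>
      ∑ j ∈ Finset.Icc (-((n + a : ℕ) : ℤ)) (n + b : ℕ), f j - ∑ j ∈ Finset.Icc (-(n : ℤ)) n, f j)
      atTop (𝓝 0) := by
    simpa using (h.comp (hpair a b)).sub (h.comp (hpair 0 0))
  have hnat (g : ℤ → G) (hg : Tendsto (fun n : ℕ => g (n + 1)) atTop (𝓝 0)) :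
      Tendsto g atTop (𝓝 0) := by
    rw [← Nat.map_cast_int_atTop, tendsto_map'_iff, ← tendsto_add_atTop_iff_nat 1]
    simpa using hg
  rw [Int.cofinite_eq, tendsto_sup]
  constructor
  · have hneg := hnat (fun j => f (-j)) <| (hdiff 1 0).congr fun n => by
      rw [Nat.cast_add, Nat.cast_one, add_zero, neg_add', ← Finset.insert_Icc_left_eq_Icc_sub_one
        (by omega), Finset.sum_insert (by simp), add_sub_cancel_right]
    simpa [Function.comp_def] using hneg.comp tendsto_neg_atBot_atTop
  · refine hnat f <| (hdiff 0 1).congr fun n => ?_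
    push_cast [add_zero]
    rw [← Finset.insert_Icc_right_eq_Icc_add_one (by omega), Finset.sum_insert (by simp),
      add_sub_cancel_right]

section BanachSteinhaus

variable {𝕂 E : Type*} [NontriviallyNormedField 𝕂] [AddCommGroup E] [Module 𝕂 E]
  [TopologicalSpace E] {p : ℕ → Seminorm 𝕂 E}

theorem WithSeminorms.baireSpace (hp : WithSeminorms p)
    (hcomplete : ∀ u : ℕ → E,
      (∀ V ∈ 𝓝 (0 : E), ∃ n₀ : ℕ, ∀ m ≥ n₀, ∀ n ≥ n₀, u n - u m ∈ V) →
      ∃ x : E, Tendsto u atTop (𝓝 x)) :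
    BaireSpace E := by
  have := hp.topologicalAddGroup
  let _ : UniformSpace E := IsTopologicalAddGroup.rightUniformSpace E
  have : IsUniformAddGroup E := isUniformAddGroup_of_addCommGroup
  have := hp.firstCountableTopology
  have : (uniformity E).IsCountablyGenerated := IsUniformAddGroup.uniformity_countably_generated
  have : CompleteSpace E := by
    refine UniformSpace.complete_of_cauchySeq_tendsto fun u hu => hcomplete u fun V hV => ?_
    rw [cauchySeq_iff] at hu
    exact hu {q : E × E | q.2 - q.1 ∈ V}
      (by rw [uniformity_eq_comap_nhds_zero]; exact preimage_mem_comap hV)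
  let _ : PseudoMetricSpace E := UniformSpace.pseudoMetricSpace E
  infer_instance

theorem WithSeminorms.exists_le_mul_of_forall_bddAbove [BarrelledSpace 𝕂 E]
    (hp : WithSeminorms p) (hmono : Monotone p)
    {ι : Type*} (q : ι → Seminorm 𝕂 E) (hq : ∀ i, Continuous (q i))
    (H : ∀ x, BddAbove (range fun i => q i x)) :
    ∃ (k : ℕ) (C : ℝ), 0 ≤ C ∧ ∀ i x, q i x ≤ C * p k x := by
  have hbdd : BddAbove (range q) := Seminorm.bddAbove_range_iff.2 H
  have hcont : Continuous ⇑(⨆ i, q i) := by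
    rw [Seminorm.coe_iSup_eq hbdd]
    exact Seminorm.continuous_iSup q hq hbdd
  obtain ⟨s, C, -, hle⟩ := Seminorm.bound_of_continuous hp _ hcont
  refine ⟨s.sup id, C, C.coe_nonneg, fun i x => ?_⟩
  calc q i x ≤ (⨆ i, q i) x := le_ciSup hbdd i x
    _ ≤ C * s.sup p x := hle x
    _ ≤ C * p (s.sup id) x := by
      gcongr
      exact Finset.sup_le (fun i hi => hmono (Finset.le_sup (f := id) hi)) x

end BanachSteinhaus

theorem exists_norm_coord_mul_le {𝕂 E : Type*} [NontriviallyNormedField 𝕂] [AddCommGroup E]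
    [Module 𝕂 E] [TopologicalSpace E] [BarrelledSpace 𝕂 E] {p : ℕ → Seminorm 𝕂 E}
    (hp : WithSeminorms p) (hmono : Monotone p) (ι : E →ₗ[𝕂] ℤ → 𝕂)
    (hι_cont : ∀ j : ℤ, Continuous fun x : E => ι x j) (e : ℤ → E)
    (hbasis : ∀ x : E, Tendsto
      (fun mn : ℕ × ℕ => ∑ j ∈ Finset.Icc (-(mn.1 : ℤ)) (mn.2 : ℤ), ι x j • e j)
      atTop (𝓝 x)) (k : ℕ) :
    ∃ (k' : ℕ) (C : ℝ), 0 ≤ C ∧ ∀ j x, ‖ι x j‖ * p k (e j) ≤ C * p k' x := by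
  have := hp.topologicalAddGroup
  have := hp.continuousSMul
  let q (j : ℤ) : Seminorm 𝕂 E := (p k).comp (((LinearMap.proj j).comp ι).smulRight (e j))
  have hq (j : ℤ) (x : E) : q j x = p k (ι x j • e j) := rfl
  have hbdd (x : E) : BddAbove (range fun j => q j x) := by
    simp only [hq]
    exact (((hp.continuous_seminorm k).tendsto 0).comp
      (tendsto_cofinite_zero_of_tendsto_sum_Icc (hbasis x))).bddAbove_range_of_cofinite
  obtain ⟨k', C, hC, hle⟩ := hp.exists_le_mul_of_forall_bddAbove hmono q
    (fun j => (hp.continuous_seminorm k).comp ((hι_cont j).smul continuous_const)) hbdd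
  exact ⟨k', C, hC, fun j x => by simpa only [hq, map_smul_eq_mul] using hle j x⟩

theorem IsWeightedShift.exists_isBoundedUnder_imp {𝕂 E : Type*} [NontriviallyNormedField 𝕂]
    [AddCommGroup E] [Module 𝕂 E] [TopologicalSpace E] [BarrelledSpace 𝕂 E]
    {p : ℕ → Seminorm 𝕂 E} (hp : WithSeminorms p) (hmono : Monotone p) {ι : E →ₗ[𝕂] ℤ → 𝕂}
    (hι_inj : Function.Injective ι) (hι_cont : ∀ j : ℤ, Continuous fun x : E => ι x j)
    {e : ℤ → E} (hbasis : ∀ x : E, Tendsto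
      (fun mn : ℕ × ℕ => ∑ j ∈ Finset.Icc (-(mn.1 : ℤ)) (mn.2 : ℤ), ι x j • e j)
      atTop (𝓝 x))
    {w : ℤ → 𝕂} (hw : ∀ n, w n ≠ 0) {T : E ≃L[𝕂] E} (hT : IsWeightedShift ι w T) (k : ℕ)
    {x : E} (hx : x ≠ 0) :
    ∃ k', (IsBoundedUnder (· ≤ ·) atTop (fun n : ℤ => p k' ((T ^ n) x)) →
        IsBoundedUnder (· ≤ ·) atTop fun j => ‖weightProduct w j‖ * p k (e j)) ∧
      (IsBoundedUnder (· ≤ ·) atBot (fun n : ℤ => p k' ((T ^ n) x)) →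
        IsBoundedUnder (· ≤ ·) atBot fun j => ‖weightProduct w j‖ * p k (e j)) := by
  obtain ⟨k', C, hC, hle⟩ := exists_norm_coord_mul_le hp hmono ι hι_cont e hbasis k
  obtain ⟨t, ht⟩ : ∃ t, ι x t ≠ 0 := by
    by_contra! h
    exact hx (hι_inj (by rw [map_zero]; exact funext h))
  exact ⟨k', isBoundedUnder_of_le_mul_sub (by positivity) t
    (hT.norm_weightProduct_mul_le hw hle ht)⟩

section Expansive

variable {𝕂 E : Type*} [RCLike 𝕂] [AddCommGroup E] [Module 𝕂 E] [TopologicalSpace E]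
  (p : ℕ → Seminorm 𝕂 E) (T : E ≃L[𝕂] E)

theorem topologicallyExpansiveSeq_iff [IsTopologicalAddGroup E] :
    TopologicallyExpansiveSeq p T ↔ ∀ x, x ≠ 0 → ∃ k,
      ¬IsBoundedUnder (· ≤ ·) atTop (fun n : ℤ => p k ((T ^ n) x)) ∨
        ¬IsBoundedUnder (· ≤ ·) atBot (fun n : ℤ => p k ((T ^ n) x)) := by
  simp only [TopologicallyExpansiveSeq, ← not_and_or,
    ← bddAbove_range_iff_isBoundedUnder_atTop_and_atBot, not_bddAbove_iff, exists_range_iff]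

theorem topologicallyPositivelyExpansiveSeq_iff :
    TopologicallyPositivelyExpansiveSeq p T ↔ ∀ x, x ≠ 0 → ∃ k,
      ¬IsBoundedUnder (· ≤ ·) atTop (fun n : ℤ => p k ((T ^ n) x)) := by
  simp only [TopologicallyPositivelyExpansiveSeq, ← forall_exists_lt_natCast_add_iff 0, add_zero,
    zpow_natCast, T.coe_pow]

theorem topologicallyPositivelyExpansiveSeq_symm_iff :
    TopologicallyPositivelyExpansiveSeq p T.symm ↔ ∀ x, x ≠ 0 → ∃ k,
      ¬IsBoundedUnder (· ≤ ·) atBot (fun n : ℤ => p k ((T ^ n) x)) := by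
  simp only [TopologicallyPositivelyExpansiveSeq, ← forall_exists_lt_sub_natCast_iff 0, zero_sub,
    T.coe_zpow_neg_natCast]

end Expansive

section UnboundedWeights

variable {K : Type*} [NormedField K] (w : ℤ → K) (g : ℤ → ℝ)

theorem forall_exists_lt_prod_norm_mul_iff :
    (∀ R : ℝ, ∃ n : ℕ, 1 ≤ n ∧ R < (∏ j ∈ Finset.Icc (1 : ℤ) n, ‖w j‖) * g (n + 1)) ↔
      ¬IsBoundedUnder (· ≤ ·) atTop fun n => ‖weightProduct w n‖ * g n := by
  simp only [← norm_weightProduct_natCast_add_one]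
  exact forall_exists_lt_natCast_add_iff (f := fun n => ‖weightProduct w n‖ * g n) 1

theorem forall_exists_lt_inv_prod_norm_mul_iff :
    (∀ R : ℝ, ∃ n : ℕ, 1 ≤ n ∧ R < (∏ j ∈ Finset.Icc (1 - (n : ℤ)) 0, ‖w j‖)⁻¹ * g (1 - n)) ↔
      ¬IsBoundedUnder (· ≤ ·) atBot fun n => ‖weightProduct w n‖ * g n := by
  simp only [← norm_weightProduct_one_sub_natCast]
  exact forall_exists_lt_sub_natCast_iff (f := fun n => ‖weightProduct w n‖ * g n) 1

end UnboundedWeights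

theorem weightedShift_topologicallyExpansive_iff_general
    {𝕂 : Type*} [RCLike 𝕂] {E : Type*} [AddCommGroup E] [Module 𝕂 E]
    [TopologicalSpace E] [IsTopologicalAddGroup E]
    (ι : E →ₗ[𝕂] (ℤ → 𝕂)) (hι_inj : Function.Injective ι)
    (hι_cont : ∀ j : ℤ, Continuous fun x : E => ι x j)
    (p : ℕ → Seminorm 𝕂 E) (hp : WithSeminorms p) (hmono : Monotone p)
    (hcomplete : ∀ u : ℕ → E,
      (∀ V ∈ 𝓝 (0 : E), ∃ n₀ : ℕ, ∀ m ≥ n₀, ∀ n ≥ n₀, u n - u m ∈ V) →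
      ∃ x : E, Tendsto u atTop (𝓝 x))
    (e : ℤ → E) (he : ∀ n j : ℤ, ι (e n) j = if j = n then 1 else 0)
    (hbasis : ∀ x : E, Tendsto
      (fun mn : ℕ × ℕ => ∑ j ∈ Finset.Icc (-(mn.1 : ℤ)) (mn.2 : ℤ), ι x j • e j)
      atTop (𝓝 x))
    (w : ℤ → 𝕂) (hw : ∀ n : ℤ, w n ≠ 0)
    (Fw : E ≃L[𝕂] E) (hFw : ∀ (x : E) (n : ℤ), ι (Fw x) n = w (n - 1) * ι x (n - 1)) :
    (TopologicallyExpansiveSeq p Fw ↔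
      ∃ k : ℕ,
        (∀ R : ℝ, ∃ n : ℕ, 1 ≤ n ∧
          R < (∏ j ∈ Finset.Icc (1 : ℤ) (n : ℤ), ‖w j‖) * p k (e ((n : ℤ) + 1))) ∨
        (∀ R : ℝ, ∃ n : ℕ, 1 ≤ n ∧
          R < (∏ j ∈ Finset.Icc (1 - (n : ℤ)) (0 : ℤ), ‖w j‖)⁻¹ * p k (e (1 - (n : ℤ))))) ∧
    ((∃ k : ℕ,
        (∀ R : ℝ, ∃ n : ℕ, 1 ≤ n ∧
          R < (∏ j ∈ Finset.Icc (1 : ℤ) (n : ℤ), ‖w j‖) * p k (e ((n : ℤ) + 1))) ∨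
        (∀ R : ℝ, ∃ n : ℕ, 1 ≤ n ∧
          R < (∏ j ∈ Finset.Icc (1 - (n : ℤ)) (0 : ℤ), ‖w j‖)⁻¹ * p k (e (1 - (n : ℤ))))) ↔
      (TopologicallyPositivelyExpansiveSeq p (⇑Fw) ∨
        TopologicallyPositivelyExpansiveSeq p (⇑Fw.symm))) := by
  have := hp.baireSpace hcomplete
  have := hp.continuousSMul
  have hT : IsWeightedShift ι w Fw := hFw
  set growth : ℕ → ℤ → ℝ := fun k n => ‖weightProduct w n‖ * p k (e n)
  have hcond (k : ℕ) :
      ((∀ R : ℝ, ∃ n : ℕ, 1 ≤ n ∧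
          R < (∏ j ∈ Finset.Icc (1 : ℤ) (n : ℤ), ‖w j‖) * p k (e ((n : ℤ) + 1))) ∨
        (∀ R : ℝ, ∃ n : ℕ, 1 ≤ n ∧
          R < (∏ j ∈ Finset.Icc (1 - (n : ℤ)) (0 : ℤ), ‖w j‖)⁻¹ * p k (e (1 - (n : ℤ))))) ↔
        ¬IsBoundedUnder (· ≤ ·) atTop (growth k) ∨ ¬IsBoundedUnder (· ≤ ·) atBot (growth k) :=
    or_congr (forall_exists_lt_prod_norm_mul_iff w fun n => p k (e n))
      (forall_exists_lt_inv_prod_norm_mul_iff w fun n => p k (e n))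
  have he₁ : e 1 ≠ 0 := fun h => by simpa [h] using he 1 1
  have horbit (k : ℕ) := isBoundedUnder_of_le_mul_sub (f := fun n => p k ((Fw ^ n) (e 1)))
    (g := growth k) zero_le_one (-1) fun n => by
      rw [hT.zpow_apply_basis hι_inj he hw, weightProduct_one, div_one, map_smul_eq_mul, one_mul,
        sub_neg_eq_add, add_comm]
  rw [topologicallyExpansiveSeq_iff, topologicallyPositivelyExpansiveSeq_symm_iff,
    topologicallyPositivelyExpansiveSeq_iff]
  simp only [hcond]
  refine ⟨⟨fun h => ?_, fun ⟨k, hk⟩ x hx => ?_⟩,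
    ⟨fun ⟨k, hk⟩ => hk.imp (fun hk x hx => ?_) (fun hk x hx => ?_), fun h => ?_⟩⟩
  · obtain ⟨k, hk⟩ := h (e 1) he₁
    exact ⟨k, hk.imp (mt (horbit k).1) (mt (horbit k).2)⟩
  · obtain ⟨k', htop, hbot⟩ := hT.exists_isBoundedUnder_imp hp hmono hι_inj hι_cont hbasis hw k hx
    exact ⟨k', hk.imp (mt htop) (mt hbot)⟩
  · obtain ⟨k', htop, -⟩ := hT.exists_isBoundedUnder_imp hp hmono hι_inj hι_cont hbasis hw k hx
    exact ⟨k', mt htop hk⟩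
  · obtain ⟨k', -, hbot⟩ := hT.exists_isBoundedUnder_imp hp hmono hι_inj hι_cont hbasis hw k hx
    exact ⟨k', mt hbot hk⟩
  · rcases h with h | h <;> obtain ⟨k, hk⟩ := h (e 1) he₁
    exacts [⟨k, .inl (mt (horbit k).1 hk)⟩, ⟨k, .inr (mt (horbit k).2 hk)⟩]

/-- Let `X` be a Fréchet sequence space over `ℤ` (realized by a continuous-in-each-coordinate
injective linear embedding `ι : X → 𝕂^ℤ`, with a complete metrizable locally convex topology
induced by the increasing sequence of seminorms `p`), in which the canonical vectors `(e_n)`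
form a basis, and suppose the bilateral weighted forward shift `F_w` (for a weight sequence `w`
of nonzero scalars) is an invertible operator on `X`. Then the following are equivalent:
(i) `F_w` is topologically expansive; (ii) there is `k` with
`sup_n |w₁ ⋯ w_n| ‖e_{n+1}‖_k = ∞` or `sup_n |w_{−n+1} ⋯ w₀|⁻¹ ‖e_{−n+1}‖_k = ∞`;
(iii) `F_w` or `F_w⁻¹` is topologically positively expansive. -/
theorem weightedShift_topologicallyExpansive_iff
    {𝕂 : Type*} [RCLike 𝕂] {E : Type*} [AddCommGroup E] [Module 𝕂 E]
    [TopologicalSpace E] [IsTopologicalAddGroup E] [ContinuousSMul 𝕂 E] [T2Space E]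
    (ι : E →ₗ[𝕂] (ℤ → 𝕂)) (hι_inj : Function.Injective ι)
    (hι_cont : ∀ j : ℤ, Continuous fun x : E => ι x j)
    (p : ℕ → Seminorm 𝕂 E) (hp : WithSeminorms p) (hmono : Monotone p)
    (hcomplete : ∀ u : ℕ → E,
      (∀ V ∈ 𝓝 (0 : E), ∃ n₀ : ℕ, ∀ m ≥ n₀, ∀ n ≥ n₀, u n - u m ∈ V) →
      ∃ x : E, Tendsto u atTop (𝓝 x))
    (e : ℤ → E) (he : ∀ n j : ℤ, ι (e n) j = if j = n then 1 else 0)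
    (hbasis : ∀ x : E, Tendsto
      (fun mn : ℕ × ℕ => ∑ j ∈ Finset.Icc (-(mn.1 : ℤ)) (mn.2 : ℤ), ι x j • e j)
      atTop (𝓝 x))
    (w : ℤ → 𝕂) (hw : ∀ n : ℤ, w n ≠ 0)
    (Fw : E ≃L[𝕂] E) (hFw : ∀ (x : E) (n : ℤ), ι (Fw x) n = w (n - 1) * ι x (n - 1)) :
    (TopologicallyExpansiveSeq p Fw ↔
      ∃ k : ℕ,
        (∀ R : ℝ, ∃ n : ℕ, 1 ≤ n ∧
          R < (∏ j ∈ Finset.Icc (1 : ℤ) (n : ℤ), ‖w j‖) * p k (e ((n : ℤ) + 1))) ∨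
        (∀ R : ℝ, ∃ n : ℕ, 1 ≤ n ∧
          R < (∏ j ∈ Finset.Icc (1 - (n : ℤ)) (0 : ℤ), ‖w j‖)⁻¹ * p k (e (1 - (n : ℤ))))) ∧
    ((∃ k : ℕ,
        (∀ R : ℝ, ∃ n : ℕ, 1 ≤ n ∧
          R < (∏ j ∈ Finset.Icc (1 : ℤ) (n : ℤ), ‖w j‖) * p k (e ((n : ℤ) + 1))) ∨
        (∀ R : ℝ, ∃ n : ℕ, 1 ≤ n ∧
          R < (∏ j ∈ Finset.Icc (1 - (n : ℤ)) (0 : ℤ), ‖w j‖)⁻¹ * p k (e (1 - (n : ℤ))))) ↔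
      (TopologicallyPositivelyExpansiveSeq p (⇑Fw) ∨
        TopologicallyPositivelyExpansiveSeq p (⇑Fw.symm))) :=
  weightedShift_topologicallyExpansive_iff_general ι hι_inj hι_cont p hp hmono hcomplete e he hbasis
    w hw Fw hFw
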